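/- arXiv:2309.15597 — 4 statements merged into one kernel-verified Lean document; each statement's English description precedes it below -/
import Mathlib

section
/- Let G be a connected simple graph, let P be a path on 3 vertices vertex-disjoint from G, and let G' be the graph obtained from the disjoint union G + P by adding one edge e joining a vertex of G to a vertex of P. Then diss(G') = diss(G) + 2. -/
/-- `S` is a dissociation set of `G`: the subgraph induced by `S` has maximum degree ≤ 1. -/
def IsDissocSet {V : Type} (G : SimpleGraph V) (S : Set V) : Prop :=
  ∀ v ∈ S, ({u ∈ S | G.Adj v u}).ncard ≤ 1

/-- The dissociation number of `G`: the maximum cardinality of a dissociation set. -/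
noncomputable def dissNum {V : Type} [Fintype V] (G : SimpleGraph V) : ℕ :=
  sSup {k | ∃ S : Set V, IsDissocSet G S ∧ S.ncard = k}

open Sum

lemma zero_mem_dissSet {V : Type} (G : SimpleGraph V) :
    0 ∈ {k | ∃ S : Set V, IsDissocSet G S ∧ S.ncard = k} :=
  ⟨∅, fun v hv => absurd hv (Set.notMem_empty v), Set.ncard_empty _⟩

lemma bddAbove_dissSet {V : Type} [Fintype V] (G : SimpleGraph V) :
    BddAbove {k | ∃ S : Set V, IsDissocSet G S ∧ S.ncard = k} := by
  refine ⟨Fintype.card V, ?_⟩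
  rintro k ⟨S, -, rfl⟩
  calc S.ncard ≤ (Set.univ : Set V).ncard :=
        Set.ncard_le_ncard (Set.subset_univ S) Set.finite_univ
    _ = Fintype.card V := by simp [Set.ncard_univ, Nat.card_eq_fintype_card]

lemma le_dissNum {V : Type} [Fintype V] {G : SimpleGraph V} {S : Set V}
    (h : IsDissocSet G S) : S.ncard ≤ dissNum G :=
  le_csSup (bddAbove_dissSet G) ⟨S, h, rfl⟩

lemma exists_dissNum {V : Type} [Fintype V] (G : SimpleGraph V) :
    ∃ S : Set V, IsDissocSet G S ∧ S.ncard = dissNum G :=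
  Nat.sSup_mem ⟨0, zero_mem_dissSet G⟩ (bddAbove_dissSet G)

/-- Let `G` be a connected graph and `P` a path on 3 vertices disjoint from `G`. If `G'`
is obtained from the disjoint union `G + P` by adding one edge joining a vertex `a` of
`G` to a vertex `b` of `P`, then `diss(G') = diss(G) + 2`.  Here `P` is the path
`0 - 1 - 2` on `Fin 3`. -/
theorem dissNum_add_two_path
    {V : Type} [Fintype V] (G : SimpleGraph V) (hG : G.Connected) (a : V) (b : Fin 3) :
    dissNum (SimpleGraph.fromRel (fun x y : V ⊕ Fin 3 =>
      (∃ u v : V, G.Adj u v ∧ x = Sum.inl u ∧ y = Sum.inl v) ∨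
      (∃ i : Fin 2, x = Sum.inr i.castSucc ∧ y = Sum.inr i.succ) ∨
      (x = Sum.inl a ∧ y = Sum.inr b))) = dissNum G + 2 := by
  set H : SimpleGraph (V ⊕ Fin 3) := SimpleGraph.fromRel (fun x y : V ⊕ Fin 3 =>
      (∃ u v : V, G.Adj u v ∧ x = Sum.inl u ∧ y = Sum.inl v) ∨
      (∃ i : Fin 2, x = Sum.inr i.castSucc ∧ y = Sum.inr i.succ) ∨
      (x = Sum.inl a ∧ y = Sum.inr b)) with hH
  -- adjacency characterizations
  have hII : ∀ u v : V, H.Adj (inl u) (inl v) ↔ G.Adj u v := by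
    intro u v
    simp only [hH, SimpleGraph.fromRel_adj]
    constructor
    · rintro ⟨hne, h | h⟩
      · rcases h with ⟨u', v', h, hu, hv⟩ | ⟨i, hu, hv⟩ | ⟨hu, hv⟩
        · simp_all
        · simp_all
        · simp_all
      · rcases h with ⟨u', v', h, hu, hv⟩ | ⟨i, hu, hv⟩ | ⟨hu, hv⟩
        · simp_all [SimpleGraph.adj_comm]
        · simp_all
        · simp_all
    · intro h
      exact ⟨by simp [h.ne], Or.inl (Or.inl ⟨u, v, h, rfl, rfl⟩)⟩
  have hIR : ∀ (u : V) (i : Fin 3), H.Adj (inl u) (inr i) ↔ u = a ∧ i = b := by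
    intro u i
    simp only [hH, SimpleGraph.fromRel_adj]
    constructor
    · rintro ⟨hne, h | h⟩
      · rcases h with ⟨u', v', h, hu, hv⟩ | ⟨j, hu, hv⟩ | ⟨hu, hv⟩ <;> simp_all
      · rcases h with ⟨u', v', h, hu, hv⟩ | ⟨j, hu, hv⟩ | ⟨hu, hv⟩ <;> simp_all
    · rintro ⟨rfl, rfl⟩
      exact ⟨by simp, Or.inl (Or.inr (Or.inr ⟨rfl, rfl⟩))⟩
  have hRR : ∀ i j : Fin 3, H.Adj (inr i) (inr j) ↔
      ((i = 0 ∧ j = 1) ∨ (i = 1 ∧ j = 2) ∨ (i = 1 ∧ j = 0) ∨ (i = 2 ∧ j = 1)) := by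
    intro i j
    simp only [hH, SimpleGraph.fromRel_adj]
    constructor
    · rintro ⟨hne, h | h⟩
      · rcases h with ⟨u', v', h, hu, hv⟩ | ⟨k, hu, hv⟩ | ⟨hu, hv⟩
        · simp_all
        · simp only [inr.injEq] at hu hv
          subst hu; subst hv
          fin_cases k <;> simp
        · simp_all
      · rcases h with ⟨u', v', h, hu, hv⟩ | ⟨k, hu, hv⟩ | ⟨hu, hv⟩
        · simp_all
        · simp only [inr.injEq] at hu hv
          subst hu; subst hv
          fin_cases k <;> simp
        · simp_all
    · rintro (⟨rfl, rfl⟩ | ⟨rfl, rfl⟩ | ⟨rfl, rfl⟩ | ⟨rfl, rfl⟩)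
      · exact ⟨by simp, Or.inl (Or.inr (Or.inl ⟨0, rfl, rfl⟩))⟩
      · exact ⟨by simp, Or.inl (Or.inr (Or.inl ⟨1, rfl, rfl⟩))⟩
      · exact ⟨by simp, Or.inr (Or.inr (Or.inl ⟨0, rfl, rfl⟩))⟩
      · exact ⟨by simp, Or.inr (Or.inr (Or.inl ⟨1, rfl, rfl⟩))⟩
  -- upper bound
  have upper : dissNum H ≤ dissNum G + 2 := by
    apply csSup_le ⟨0, zero_mem_dissSet H⟩
    rintro k ⟨S', hS', rfl⟩
    set T : Set V := Sum.inl ⁻¹' S' with hT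
    have hTd : IsDissocSet G T := by
      intro v hv
      have h1 := hS' (inl v) hv
      have hsub : (inl '' {u ∈ T | G.Adj v u}) ⊆ {u ∈ S' | H.Adj (inl v) u} := by
        rintro _ ⟨u, ⟨hu, hadj⟩, rfl⟩
        exact ⟨hu, (hII v u).mpr hadj⟩
      calc ({u ∈ T | G.Adj v u}).ncard
          = (inl '' {u ∈ T | G.Adj v u}).ncard :=
            (Set.ncard_image_of_injective _ inl_injective).symm
        _ ≤ ({u ∈ S' | H.Adj (inl v) u}).ncard := Set.ncard_le_ncard hsub (Set.toFinite _)
        _ ≤ 1 := h1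
    have hsplit : S' = (inl '' T) ∪ (S' ∩ Set.range (inr : Fin 3 → V ⊕ Fin 3)) := by
      ext x
      cases x with
      | inl v => simp [hT]
      | inr i => simp
    have hdisj : Disjoint (inl '' T) (S' ∩ Set.range (inr : Fin 3 → V ⊕ Fin 3)) := by
      rw [Set.disjoint_left]
      rintro _ ⟨u, -, rfl⟩ ⟨-, j, hj⟩
      exact (inr_ne_inl hj)
    have hR : (S' ∩ Set.range (inr : Fin 3 → V ⊕ Fin 3)).ncard ≤ 2 := by
      by_contra h
      push_neg at h
      have hsub : S' ∩ Set.range inr ⊆ Set.range (inr : Fin 3 → V ⊕ Fin 3) :=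
        Set.inter_subset_right
      have hcard3 : (Set.range (inr : Fin 3 → V ⊕ Fin 3)).ncard = 3 := by
        rw [← Set.image_univ, Set.ncard_image_of_injective _ inr_injective,
          Set.ncard_univ]
        simp
      have heq : S' ∩ Set.range inr = Set.range (inr : Fin 3 → V ⊕ Fin 3) :=
        Set.eq_of_subset_of_ncard_le hsub (by omega) (Set.toFinite _)
      have hmem : ∀ i : Fin 3, inr i ∈ S' := by
        intro i
        have hmemr : (inr i : V ⊕ Fin 3) ∈ Set.range (inr : Fin 3 → V ⊕ Fin 3) := ⟨i, rfl⟩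
        rw [← heq] at hmemr
        exact hmemr.1
      have h1 := hS' (inr 1) (hmem 1)
      have hsub2 : ({inr 0, inr 2} : Set (V ⊕ Fin 3)) ⊆ {u ∈ S' | H.Adj (inr 1) u} := by
        rintro x (rfl | rfl)
        · exact ⟨hmem 0, (hRR 1 0).mpr (by simp)⟩
        · exact ⟨hmem 2, (hRR 1 2).mpr (by simp)⟩
      have : 2 ≤ ({u ∈ S' | H.Adj (inr 1) u}).ncard := by
        calc 2 = ({inr 0, inr 2} : Set (V ⊕ Fin 3)).ncard :=
            (Set.ncard_pair (by simp)).symm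
          _ ≤ _ := Set.ncard_le_ncard hsub2 (Set.toFinite _)
      omega
    calc S'.ncard = (inl '' T).ncard + (S' ∩ Set.range inr).ncard := by
          have huni := Set.ncard_union_eq hdisj (Set.toFinite _) (Set.toFinite _)
          rw [← hsplit] at huni
          exact huni
      _ = T.ncard + (S' ∩ Set.range inr).ncard := by
          rw [Set.ncard_image_of_injective _ inl_injective]
      _ ≤ dissNum G + 2 := add_le_add (le_dissNum hTd) hR
  -- lower bound
  have lower : dissNum G + 2 ≤ dissNum H := by
    obtain ⟨S, hS, hcard⟩ := exists_dissNum G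
    set c : Fin 3 := if b = 0 then 1 else 0 with hc
    set d : Fin 3 := if b = 2 then 1 else 2 with hd
    have hcd : c ≠ d := by fin_cases b <;> simp [hc, hd]
    have hbc : b ≠ c := by fin_cases b <;> simp [hc]
    have hbd : b ≠ d := by fin_cases b <;> simp [hd]
    set S' : Set (V ⊕ Fin 3) := (inl '' S) ∪ {inr c, inr d} with hS'
    have hdisj : Disjoint (inl '' S) ({inr c, inr d} : Set (V ⊕ Fin 3)) := by
      rw [Set.disjoint_left]
      rintro _ ⟨u, -, rfl⟩ (h | h) <;> exact inl_ne_inr h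
    have hScard : S'.ncard = dissNum G + 2 := by
      rw [hS', Set.ncard_union_eq hdisj (Set.toFinite _) (Set.toFinite _),
        Set.ncard_image_of_injective _ inl_injective, hcard,
        Set.ncard_pair (by simp [hcd])]
    have hSd : IsDissocSet H S' := by
      rintro x hx
      rcases hx with ⟨w, hw, rfl⟩ | hx
      · -- x = inl w
        have heq : {u ∈ S' | H.Adj (inl w) u} = inl '' {u ∈ S | G.Adj w u} := by
          ext y
          constructor
          · rintro ⟨hy, hadj⟩
            rcases hy with ⟨u, hu, rfl⟩ | hy
            · exact ⟨u, ⟨hu, (hII w u).mp hadj⟩, rfl⟩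
            · exfalso
              rcases hy with rfl | rfl
              · exact hbc (((hIR w c).mp hadj).2.symm)
              · exact hbd (((hIR w d).mp hadj).2.symm)
          · rintro ⟨u, ⟨hu, hadj⟩, rfl⟩
            exact ⟨Or.inl ⟨u, hu, rfl⟩, (hII w u).mpr hadj⟩
        rw [heq, Set.ncard_image_of_injective _ inl_injective]
        exact hS w hw
      · -- x = inr c or inr d
        have key : ∀ i : Fin 3, i ≠ b → ∀ j : Fin 3,
            {u ∈ S' | H.Adj (inr i) u} ⊆ {inr j} ∨ True := fun _ _ _ => Or.inr trivial
      -- do it directly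
        rcases hx with rfl | rfl
        · have hsub : {u ∈ S' | H.Adj (inr c) u} ⊆ {inr d} := by
            rintro y ⟨hy, hadj⟩
            rcases hy with ⟨u, hu, rfl⟩ | (rfl | rfl)
            · exact absurd ((hIR u c).mp hadj.symm).2.symm hbc
            · exact absurd rfl hadj.ne
            · rfl
          calc ({u ∈ S' | H.Adj (inr c) u}).ncard ≤ ({inr d} : Set (V ⊕ Fin 3)).ncard :=
              Set.ncard_le_ncard hsub (Set.toFinite _)
            _ = 1 := Set.ncard_singleton _
        · have hsub : {u ∈ S' | H.Adj (inr d) u} ⊆ {inr c} := by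
            rintro y ⟨hy, hadj⟩
            rcases hy with ⟨u, hu, rfl⟩ | (rfl | rfl)
            · exact absurd ((hIR u d).mp hadj.symm).2.symm hbd
            · rfl
            · exact absurd rfl hadj.ne
          calc ({u ∈ S' | H.Adj (inr d) u}).ncard ≤ ({inr c} : Set (V ⊕ Fin 3)).ncard :=
              Set.ncard_le_ncard hsub (Set.toFinite _)
            _ = 1 := Set.ncard_singleton _
    calc dissNum G + 2 = S'.ncard := hScard.symm
      _ ≤ dissNum H := le_dissNum hSd
  exact le_antisymm upper lower
end

section
/- For every integer n ≥ 4, the dissociation number of the tree W_n equals ⌈2n/3⌉. -/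
/-- `Wgraph n` is the tree `W_n` of order `n`: a path `v₁ v₂ ⋯ v_{n-1}` on `n-1` vertices
(indexed `0, …, n-2` in `Fin (n-1)`), together with one pendant vertex attached to `v₂`
(the vertex of index 1). -/
def Wgraph (n : ℕ) : SimpleGraph (Fin (n - 1) ⊕ Fin 1) :=
  SimpleGraph.fromRel (fun x y =>
    (∃ p q : Fin (n - 1), x = Sum.inl p ∧ y = Sum.inl q ∧ (p : ℕ) + 1 = q) ∨
    (∃ p : Fin (n - 1), x = Sum.inl p ∧ (p : ℕ) = 1 ∧ ∃ z : Fin 1, y = Sum.inr z))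

-- adjacency characterization
lemma wadj (n : ℕ) (x y : Fin (n-1) ⊕ Fin 1) :
    (Wgraph n).Adj x y ↔ x ≠ y ∧
      ((∃ p q : Fin (n - 1), (x = Sum.inl p ∧ y = Sum.inl q ∨ x = Sum.inl q ∧ y = Sum.inl p) ∧ (p : ℕ) + 1 = q) ∨
       (∃ p : Fin (n - 1), (p : ℕ) = 1 ∧ ((x = Sum.inl p ∧ ∃ z, y = Sum.inr z) ∨ (y = Sum.inl p ∧ ∃ z, x = Sum.inr z)))) := by
  rw [Wgraph, SimpleGraph.fromRel_adj]
  constructor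
  · rintro ⟨hne, h | h⟩ <;> constructor <;> try exact hne
    · rcases h with ⟨p,q,hx,hy,hpq⟩ | ⟨p,hx,hp,z,hy⟩
      · exact Or.inl ⟨p,q,Or.inl ⟨hx,hy⟩,hpq⟩
      · exact Or.inr ⟨p,hp,Or.inl ⟨hx,z,hy⟩⟩
    · rcases h with ⟨p,q,hy,hx,hpq⟩ | ⟨p,hy,hp,z,hx⟩
      · exact Or.inl ⟨p,q,Or.inr ⟨hx,hy⟩,hpq⟩
      · exact Or.inr ⟨p,hp,Or.inr ⟨hy,z,hx⟩⟩
  · rintro ⟨hne, h⟩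
    refine ⟨hne, ?_⟩
    rcases h with ⟨p,q,⟨hx,hy⟩ | ⟨hx,hy⟩,hpq⟩ | ⟨p,hp,⟨hx,z,hy⟩ | ⟨hy,z,hx⟩⟩
    · exact Or.inl (Or.inl ⟨p,q,hx,hy,hpq⟩)
    · exact Or.inr (Or.inl ⟨p,q,hy,hx,hpq⟩)
    · exact Or.inl (Or.inr ⟨p,hx,hp,z,hy⟩)
    · exact Or.inr (Or.inr ⟨p,hy,hp,z,hx⟩)


lemma wadj_path {n : ℕ} {p q : Fin (n-1)} (h : (p:ℕ) + 1 = q) :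
    (Wgraph n).Adj (Sum.inl p) (Sum.inl q) := by
  rw [wadj]
  refine ⟨by simp; exact fun hpq => by omega, Or.inl ⟨p, q, Or.inl ⟨rfl, rfl⟩, h⟩⟩

lemma wadj_pend {n : ℕ} {p : Fin (n-1)} (h : (p:ℕ) = 1) (z : Fin 1) :
    (Wgraph n).Adj (Sum.inl p) (Sum.inr z) := by
  rw [wadj]
  exact ⟨by simp, Or.inr ⟨p, h, Or.inl ⟨rfl, ⟨z, rfl⟩⟩⟩⟩

/-- no vertex of a dissociation set has two distinct neighbours inside it -/
lemma key {n : ℕ} {S : Set (Fin (n-1) ⊕ Fin 1)} (hS : IsDissocSet (Wgraph n) S)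
    {v a b : Fin (n-1) ⊕ Fin 1} (hv : v ∈ S) (ha : a ∈ S) (hb : b ∈ S)
    (hva : (Wgraph n).Adj v a) (hvb : (Wgraph n).Adj v b) : a = b := by
  by_contra hab
  have h2 : ({a, b} : Set _) ⊆ {u ∈ S | (Wgraph n).Adj v u} := by
    rintro x (rfl | rfl) <;> exact ⟨by assumption, by assumption⟩
  have h3 := Set.ncard_le_ncard h2 (Set.toFinite _)
  rw [Set.ncard_pair hab] at h3
  have := hS v hv
  omega

lemma count_range (m : ℕ) :
    ((Finset.range m).filter (fun i => ¬ i % 3 = 1)).card = m - (m+1)/3 := by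
  induction m with
  | zero => simp
  | succ m ih =>
    rw [Finset.range_add_one, Finset.filter_insert]
    by_cases h : ¬ m % 3 = 1
    · rw [if_pos h, Finset.card_insert_of_notMem (by simp)]
      omega
    · rw [if_neg h]; omega

lemma count_fin (m : ℕ) :
    (Finset.univ.filter (fun i : Fin m => ¬ (i:ℕ) % 3 = 1)).card = m - (m+1)/3 := by
  rw [← count_range m, ← Nat.Iio_eq_range, ← Fin.map_valEmbedding_univ,
    Finset.filter_map, Finset.card_map]
  rfl

lemma nbr_inl {n : ℕ} {i : Fin (n-1)} {u : Fin (n-1) ⊕ Fin 1}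
    (h : (Wgraph n).Adj (Sum.inl i) u) :
    (∃ q : Fin (n-1), u = Sum.inl q ∧ ((i:ℕ)+1 = q ∨ (q:ℕ)+1 = i)) ∨
    ((i:ℕ) = 1 ∧ ∃ z, u = Sum.inr z) := by
  rw [wadj] at h
  obtain ⟨-, h⟩ := h
  rcases h with ⟨p,q,⟨hx,hy⟩ | ⟨hx,hy⟩,hpq⟩ | ⟨p,hp,⟨hx,z,hy⟩ | ⟨hy,z,hx⟩⟩
  · cases hx; exact Or.inl ⟨q, hy, Or.inl hpq⟩
  · cases hx; exact Or.inl ⟨p, hy, Or.inr hpq⟩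
  · cases hx; exact Or.inr ⟨hp, z, hy⟩
  · exact absurd hx (by simp)

lemma nbr_inr {n : ℕ} {z : Fin 1} {u : Fin (n-1) ⊕ Fin 1}
    (h : (Wgraph n).Adj (Sum.inr z) u) :
    ∃ q : Fin (n-1), u = Sum.inl q ∧ (q:ℕ) = 1 := by
  rw [wadj] at h
  obtain ⟨-, h⟩ := h
  rcases h with ⟨p,q,⟨hx,hy⟩ | ⟨hx,hy⟩,hpq⟩ | ⟨p,hp,⟨hx,z',hy⟩ | ⟨hy,z',hx⟩⟩
  · exact absurd hx (by simp)
  · exact absurd hx (by simp)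
  · exact absurd hx (by simp)
  · exact ⟨p, hy, hp⟩

def Sset (n : ℕ) : Set (Fin (n-1) ⊕ Fin 1) :=
  Sum.inl '' {i | ¬ (i:ℕ) % 3 = 1} ∪ Set.range Sum.inr

lemma Sset_dissoc (n : ℕ) : IsDissocSet (Wgraph n) (Sset n) := by
  intro v hv
  rw [Set.ncard_le_one_iff (Set.toFinite _)]
  rintro a b ⟨haS, hadj_a⟩ ⟨hbS, hadj_b⟩
  rcases hv with ⟨i, hi, rfl⟩ | ⟨z, rfl⟩
  · -- v = inl i with i % 3 ≠ 1
    simp only [Set.mem_setOf_eq] at hi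
    have hq : ∀ u, u ∈ Sset n → (Wgraph n).Adj (Sum.inl i) u →
        ∃ q : Fin (n-1), u = Sum.inl q ∧ (i:ℕ)+1 = (q:ℕ) ∨ u = Sum.inl q ∧ (q:ℕ)+1 = i := by
      intro u huS hadj
      rcases nbr_inl hadj with ⟨q, rfl, hq⟩ | ⟨h1, z, rfl⟩
      · exact ⟨q, by tauto⟩
      · omega
    obtain ⟨qa, hqa⟩ := hq a haS hadj_a
    obtain ⟨qb, hqb⟩ := hq b hbS hadj_b
    have hma : ¬ (qa:ℕ) % 3 = 1 := by
      rcases hqa with ⟨rfl, -⟩ | ⟨rfl, -⟩ <;>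
      · rcases haS with ⟨j, hj, hji⟩ | ⟨z, hz⟩
        · simp only [Set.mem_setOf_eq] at hj
          rw [Sum.inl.injEq] at hji; rwa [← hji]
        · exact absurd hz (by simp)
    have hmb : ¬ (qb:ℕ) % 3 = 1 := by
      rcases hqb with ⟨rfl, -⟩ | ⟨rfl, -⟩ <;>
      · rcases hbS with ⟨j, hj, hji⟩ | ⟨z, hz⟩
        · simp only [Set.mem_setOf_eq] at hj
          rw [Sum.inl.injEq] at hji; rwa [← hji]
        · exact absurd hz (by simp)
    have : qa = qb := by
      apply Fin.ext
      rcases hqa with ⟨-, h1⟩ | ⟨-, h1⟩ <;> rcases hqb with ⟨-, h2⟩ | ⟨-, h2⟩ <;> omega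
    rcases hqa with ⟨rfl, -⟩ | ⟨rfl, -⟩ <;> rcases hqb with ⟨rfl, -⟩ | ⟨rfl, -⟩ <;> rw [this]
  · -- v = inr z : pendant, no neighbours in S
    obtain ⟨q, rfl, hq1⟩ := nbr_inr hadj_a
    rcases haS with ⟨j, hj, hji⟩ | ⟨z', hz⟩
    · simp only [Set.mem_setOf_eq] at hj
      rw [Sum.inl.injEq] at hji
      subst hji; omega
    · exact absurd hz (by simp)

lemma Sset_ncard (n : ℕ) (hn : 4 ≤ n) : (Sset n).ncard = n - n/3 := by
  rw [Sset, Set.ncard_union_eq (by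
      rw [Set.disjoint_left]; rintro x ⟨i, -, rfl⟩ ⟨z, hz⟩; simp at hz)
    (Set.toFinite _) (Set.toFinite _)]
  have h1 : ({i : Fin (n-1) | ¬ (i:ℕ) % 3 = 1}) =
      ↑(Finset.univ.filter fun i : Fin (n-1) => ¬ (i:ℕ) % 3 = 1) := by
    ext x; simp
  rw [Set.ncard_image_of_injective _ Sum.inl_injective, h1, Set.ncard_coe_finset, count_fin,
    ← Set.image_univ, Set.ncard_image_of_injective _ Sum.inr_injective, Set.ncard_univ]
  simp only [Nat.card_eq_fintype_card, Fintype.card_fin]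
  omega

def fblock (n : ℕ) : Fin (n-1) ⊕ Fin 1 → ℕ
  | Sum.inr _ => 0
  | Sum.inl i => if (i:ℕ) ≤ 1 then 0 else ((i:ℕ)+1)/3

lemma fiber_le_two (n : ℕ) (hn : 4 ≤ n) {S : Set (Fin (n-1) ⊕ Fin 1)}
    (hS : IsDissocSet (Wgraph n) S) (T : Finset (Fin (n-1) ⊕ Fin 1))
    (hTS : ∀ v ∈ T, v ∈ S) (j : ℕ) :
    (T.filter (fun v => fblock n v = j)).card ≤ 2 := by
  classical
  rcases Nat.eq_zero_or_pos j with rfl | hj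
  · -- block 0 : {inr 0, inl 0, inl 1}
    obtain ⟨a, ha⟩ : ∃ a : Fin (n-1), (a:ℕ) = 0 := ⟨⟨0, by omega⟩, rfl⟩
    obtain ⟨b, hb⟩ : ∃ b : Fin (n-1), (b:ℕ) = 1 := ⟨⟨1, by omega⟩, rfl⟩
    have hsub : T.filter (fun v => fblock n v = 0) ⊆ {Sum.inr 0, Sum.inl a, Sum.inl b} := by
      intro v hv
      rw [Finset.mem_filter] at hv
      match v with
      | Sum.inr z =>
        have : z = 0 := Subsingleton.elim _ _
        subst this; simp
      | Sum.inl i =>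
        have hi : (i:ℕ) ≤ 1 := by
          by_contra hgt
          have := hv.2
          simp only [fblock, if_neg hgt] at this
          omega
        have : (i:ℕ) = 0 ∨ (i:ℕ) = 1 := by omega
        rcases this with h0 | h0 <;>
          simp [Sum.inl.injEq, Fin.ext_iff, ha, hb, h0]
    by_contra h
    push_neg at h
    have hCcard : ({Sum.inr 0, Sum.inl a, Sum.inl b} :
        Finset (Fin (n-1) ⊕ Fin 1)).card ≤ 3 := by
      apply le_trans (Finset.card_insert_le _ _)
      have := Finset.card_insert_le (Sum.inl a) ({Sum.inl b} : Finset (Fin (n-1) ⊕ Fin 1))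
      simp only [Finset.card_singleton] at this ⊢
      omega
    have heq : T.filter (fun v => fblock n v = 0) = {Sum.inr 0, Sum.inl a, Sum.inl b} :=
      Finset.eq_of_subset_of_card_le hsub (by omega)
    have hmemS : ∀ v ∈ ({Sum.inr 0, Sum.inl a, Sum.inl b} :
        Finset (Fin (n-1) ⊕ Fin 1)), v ∈ S := by
      intro v hv
      rw [← heq, Finset.mem_filter] at hv
      exact hTS _ hv.1
    have haS : Sum.inl a ∈ S := hmemS _ (by simp)
    have hbS : Sum.inl b ∈ S := hmemS _ (by simp)
    have hrS : (Sum.inr 0 : Fin (n-1) ⊕ Fin 1) ∈ S := hmemS _ (by simp)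
    have hadj1 : (Wgraph n).Adj (Sum.inl b) (Sum.inl a) :=
      (wadj_path (by omega)).symm
    have hadj2 : (Wgraph n).Adj (Sum.inl b) (Sum.inr 0) :=
      wadj_pend hb 0
    have := key hS hbS haS hrS hadj1 hadj2
    simp at this
  · by_cases hfull : 3*j+1 ≤ n-2
    · -- full block {3j-1, 3j, 3j+1}
      obtain ⟨a, ha⟩ : ∃ a : Fin (n-1), (a:ℕ) = 3*j-1 := ⟨⟨3*j-1, by omega⟩, rfl⟩
      obtain ⟨b, hb⟩ : ∃ b : Fin (n-1), (b:ℕ) = 3*j := ⟨⟨3*j, by omega⟩, rfl⟩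
      obtain ⟨c, hc⟩ : ∃ c : Fin (n-1), (c:ℕ) = 3*j+1 := ⟨⟨3*j+1, by omega⟩, rfl⟩
      have hsub : T.filter (fun v => fblock n v = j) ⊆ {Sum.inl a, Sum.inl b, Sum.inl c} := by
        intro v hv
        rw [Finset.mem_filter] at hv
        match v with
        | Sum.inr z =>
          have := hv.2
          simp only [fblock] at this
          omega
        | Sum.inl i =>
          have h2 := hv.2
          simp only [fblock] at h2
          split at h2
          · omega
          · have hlt : (i:ℕ) < n - 1 := i.isLt
            have : (i:ℕ) = 3*j-1 ∨ (i:ℕ) = 3*j ∨ (i:ℕ) = 3*j+1 := by omega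
            rcases this with h0 | h0 | h0 <;>
              simp [Sum.inl.injEq, Fin.ext_iff, ha, hb, hc, h0]
      by_contra h
      push_neg at h
      have hCcard : ({Sum.inl a, Sum.inl b, Sum.inl c} :
          Finset (Fin (n-1) ⊕ Fin 1)).card ≤ 3 := by
        apply le_trans (Finset.card_insert_le _ _)
        have := Finset.card_insert_le (Sum.inl b) ({Sum.inl c} : Finset (Fin (n-1) ⊕ Fin 1))
        simp only [Finset.card_singleton] at this ⊢
        omega
      have heq : T.filter (fun v => fblock n v = j) = {Sum.inl a, Sum.inl b, Sum.inl c} :=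
        Finset.eq_of_subset_of_card_le hsub (by omega)
      have hmemS : ∀ v ∈ ({Sum.inl a, Sum.inl b, Sum.inl c} :
          Finset (Fin (n-1) ⊕ Fin 1)), v ∈ S := by
        intro v hv
        rw [← heq, Finset.mem_filter] at hv
        exact hTS _ hv.1
      have haS : Sum.inl a ∈ S := hmemS _ (by simp)
      have hbS : Sum.inl b ∈ S := hmemS _ (by simp)
      have hcS : Sum.inl c ∈ S := hmemS _ (by simp)
      have hadj1 : (Wgraph n).Adj (Sum.inl b) (Sum.inl a) :=
        (wadj_path (by omega)).symm
      have hadj2 : (Wgraph n).Adj (Sum.inl b) (Sum.inl c) :=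
        wadj_path (by omega)
      have := key hS hbS haS hcS hadj1 hadj2
      rw [Sum.inl.injEq, Fin.ext_iff] at this
      omega
    · -- truncated block
      obtain ⟨a, ha⟩ : ∃ a : Fin (n-1), (a:ℕ) = min (3*j-1) (n-2) :=
        ⟨⟨min (3*j-1) (n-2), by omega⟩, rfl⟩
      obtain ⟨b, hb⟩ : ∃ b : Fin (n-1), (b:ℕ) = min (3*j) (n-2) :=
        ⟨⟨min (3*j) (n-2), by omega⟩, rfl⟩
      have hsub : T.filter (fun v => fblock n v = j) ⊆ {Sum.inl a, Sum.inl b} := by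
        intro v hv
        rw [Finset.mem_filter] at hv
        match v with
        | Sum.inr z =>
          have := hv.2
          simp only [fblock] at this
          omega
        | Sum.inl i =>
          have h2 := hv.2
          simp only [fblock] at h2
          split at h2
          · omega
          · have hlt : (i:ℕ) < n - 1 := i.isLt
            have : (i:ℕ) = (a:ℕ) ∨ (i:ℕ) = (b:ℕ) := by omega
            rcases this with h0 | h0 <;>
              simp [Sum.inl.injEq, Fin.ext_iff, h0]
      calc (T.filter (fun v => fblock n v = j)).card
          ≤ ({Sum.inl a, Sum.inl b} : Finset (Fin (n-1) ⊕ Fin 1)).card :=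
            Finset.card_le_card hsub
        _ ≤ 2 := by
            apply le_trans (Finset.card_insert_le _ _)
            simp

lemma fiber_last (n : ℕ) (hn : 4 ≤ n) (h3 : n % 3 = 1)
    (T : Finset (Fin (n-1) ⊕ Fin 1)) :
    (T.filter (fun v => fblock n v = (n-1)/3)).card ≤ 1 := by
  classical
  obtain ⟨a, ha⟩ : ∃ a : Fin (n-1), (a:ℕ) = n-2 := ⟨⟨n-2, by omega⟩, rfl⟩
  have hj1 : 1 ≤ (n-1)/3 := by omega
  have hsub : T.filter (fun v => fblock n v = (n-1)/3) ⊆ {Sum.inl a} := by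
    intro v hv
    rw [Finset.mem_filter] at hv
    match v with
    | Sum.inr z =>
      have := hv.2
      simp only [fblock] at this
      omega
    | Sum.inl i =>
      have h2 := hv.2
      simp only [fblock] at h2
      split at h2
      · omega
      · have hlt : (i:ℕ) < n - 1 := i.isLt
        have : (i:ℕ) = (a:ℕ) := by omega
        simp [Sum.inl.injEq, Fin.ext_iff, this]
  exact le_trans (Finset.card_le_card hsub) (by simp)

lemma upper (n : ℕ) (hn : 4 ≤ n) {S : Set (Fin (n-1) ⊕ Fin 1)}
    (hS : IsDissocSet (Wgraph n) S) : S.ncard ≤ n - n/3 := by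
  classical
  rw [Set.ncard_eq_toFinset_card S (Set.toFinite S)]
  set T := (Set.toFinite S).toFinset with hT
  have hTS : ∀ v ∈ T, v ∈ S := by
    intro v hv
    rwa [hT, Set.Finite.mem_toFinset] at hv
  have hmem : ∀ v ∈ T, fblock n v ∈ Finset.range ((n-1)/3 + 1) := by
    intro v _
    rw [Finset.mem_range]
    match v with
    | Sum.inr z => simp only [fblock]; omega
    | Sum.inl i =>
      simp only [fblock]
      split
      · omega
      · have hlt : (i:ℕ) < n - 1 := i.isLt
        have := Nat.div_le_div_right (c := 3) (by omega : (i:ℕ)+1 ≤ n-1)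
        omega
  rw [Finset.card_eq_sum_card_fiberwise hmem, Finset.sum_range_succ]
  have hsum1 : ∑ j ∈ Finset.range ((n-1)/3),
      (T.filter (fun v => fblock n v = j)).card ≤ 2 * ((n-1)/3) := by
    calc ∑ j ∈ Finset.range ((n-1)/3), (T.filter (fun v => fblock n v = j)).card
        ≤ (Finset.range ((n-1)/3)).card • 2 :=
          Finset.sum_le_card_nsmul _ _ 2 (fun j _ => fiber_le_two n hn hS T hTS j)
      _ = 2 * ((n-1)/3) := by rw [Finset.card_range, smul_eq_mul]; ring
  by_cases h3 : n % 3 = 1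
  · have := fiber_last n hn h3 T
    omega
  · have := fiber_le_two n hn hS T hTS ((n-1)/3)
    omega

/-- For every `n ≥ 4`, the dissociation number of the tree `W_n` is `⌈2n/3⌉`
(which equals `(2n+2)/3` in natural-number arithmetic). -/
theorem dissNum_Wgraph (n : ℕ) (hn : 4 ≤ n) :
    dissNum (Wgraph n) = (2 * n + 2) / 3 := by
  have hid : (2*n+2)/3 = n - n/3 := by omega
  have hmem : (2*n+2)/3 ∈
      {k | ∃ S : Set (Fin (n-1) ⊕ Fin 1), IsDissocSet (Wgraph n) S ∧ S.ncard = k} :=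
    ⟨Sset n, Sset_dissoc n, by rw [Sset_ncard n hn, hid]⟩
  have hub : ∀ k ∈
      {k | ∃ S : Set (Fin (n-1) ⊕ Fin 1), IsDissocSet (Wgraph n) S ∧ S.ncard = k},
      k ≤ (2*n+2)/3 := by
    rintro k ⟨S, hS, rfl⟩
    rw [hid]
    exact upper n hn hS
  rw [dissNum]
  exact le_antisymm (csSup_le ⟨_, hmem⟩ hub) (le_csSup ⟨_, hub⟩ hmem)
end

section
/- For every integer n ≥ 6, the dissociation number of the tree W̃_n equals ⌈2n/3⌉. -/
/-- `Wtilde n` is the tree `W̃_n` of order `n`: a path `v₁ v₂ ⋯ v_{n-2}` on `n-2` vertices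
(indexed `0, …, n-3` in `Fin (n-2)`), together with one pendant vertex attached to `v₂`
(index 1) and one pendant vertex attached to `v_{n-3}` (index `n-4`). -/
def Wtilde (n : ℕ) : SimpleGraph (Fin (n - 2) ⊕ Fin 2) :=
  SimpleGraph.fromRel (fun x y =>
    (∃ p q : Fin (n - 2), x = Sum.inl p ∧ y = Sum.inl q ∧ (p : ℕ) + 1 = q) ∨
    (∃ p : Fin (n - 2), x = Sum.inl p ∧ (p : ℕ) = 1 ∧ y = Sum.inr 0) ∨
    (∃ p : Fin (n - 2), x = Sum.inl p ∧ (p : ℕ) = n - 4 ∧ y = Sum.inr 1))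

open Finset

section helpers

set_option linter.unusedTactic false

lemma wt_adj_inl_inl {n : ℕ} {p q : Fin (n-2)} :
    (Wtilde n).Adj (.inl p) (.inl q) ↔ ((p:ℕ)+1 = q ∨ (q:ℕ)+1 = p) := by
  simp only [Wtilde, SimpleGraph.fromRel_adj]
  constructor
  · rintro ⟨hne, h⟩
    rcases h with (⟨a,b,ha,hb,hab⟩|⟨a,ha,h1,h0⟩|⟨a,ha,h1,h0⟩)|(⟨a,b,ha,hb,hab⟩|⟨a,ha,h1,h0⟩|⟨a,ha,h1,h0⟩) <;>
      first
        | (simp_all [Sum.inl.injEq]; omega)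
        | simp_all
  · intro h
    have hpq : p ≠ q := by
      rintro rfl; omega
    refine ⟨by simpa using hpq, ?_⟩
    rcases h with h | h
    · exact Or.inl (Or.inl ⟨p, q, rfl, rfl, h⟩)
    · exact Or.inr (Or.inl ⟨q, p, rfl, rfl, h⟩)

lemma wt_adj_inl_inr {n : ℕ} {p : Fin (n-2)} {b : Fin 2} :
    (Wtilde n).Adj (.inl p) (.inr b) ↔ ((p:ℕ) = 1 ∧ b = 0) ∨ ((p:ℕ) = n-4 ∧ b = 1) := by
  simp only [Wtilde, SimpleGraph.fromRel_adj]
  constructor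
  · rintro ⟨hne, h⟩
    rcases h with (⟨a,c,ha,hb,hab⟩|⟨a,ha,h1,h0⟩|⟨a,ha,h1,h0⟩)|(⟨a,c,ha,hb,hab⟩|⟨a,ha,h1,h0⟩|⟨a,ha,h1,h0⟩) <;>
      simp_all
  · rintro (⟨h1, rfl⟩ | ⟨h1, rfl⟩)
    · exact ⟨by simp, Or.inl (Or.inr (Or.inl ⟨p, rfl, h1, rfl⟩))⟩
    · exact ⟨by simp, Or.inl (Or.inr (Or.inr ⟨p, rfl, h1, rfl⟩))⟩

lemma wt_not_adj_inr {n : ℕ} {a b : Fin 2} : ¬ (Wtilde n).Adj (.inr a) (.inr b) := by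
  simp only [Wtilde, SimpleGraph.fromRel_adj]
  rintro ⟨hne, h⟩
  rcases h with (⟨x,c,hx,hc,hxc⟩|⟨x,hx,h1,h0⟩|⟨x,hx,h1,h0⟩)|(⟨x,c,hx,hc,hxc⟩|⟨x,hx,h1,h0⟩|⟨x,hx,h1,h0⟩) <;> simp_all

lemma ncard_le_one_of_sub {α : Type*} {s : Set α} (w : α) (h : s ⊆ {w}) : s.ncard ≤ 1 := by
  have := Set.ncard_le_ncard h (Set.finite_singleton w)
  simpa using this

lemma not_three {V : Type} [Finite V] {G : SimpleGraph V} {S : Set V}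
    (h : IsDissocSet G S) {a b c : V} (hba : G.Adj b a) (hbc : G.Adj b c)
    (hac : a ≠ c) (ha : a ∈ S) (hb : b ∈ S) (hc : c ∈ S) : False := by
  have h2 : ({a, c} : Set V) ⊆ {u ∈ S | G.Adj b u} := by
    rintro u (rfl | rfl)
    · exact ⟨ha, hba⟩
    · exact ⟨hc, hbc⟩
  have h3 := Set.ncard_le_ncard h2 (Set.toFinite _)
  rw [Set.ncard_pair hac] at h3
  have h4 := h b hb
  omega

lemma card_le_two_triple {V : Type} [Finite V] [DecidableEq V] {G : SimpleGraph V} {S : Set V}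
    (h : IsDissocSet G S) {F : Finset V} {a b c : V}
    (hFS : ∀ x ∈ F, x ∈ S) (hba : G.Adj b a) (hbc : G.Adj b c) (hac : a ≠ c)
    (hF : F ⊆ {a, b, c}) : F.card ≤ 2 := by
  by_contra hlt
  push_neg at hlt
  have hcard3 : ({a, b, c} : Finset V).card ≤ 3 := by
    apply le_trans (Finset.card_insert_le _ _)
    have := Finset.card_insert_le b ({c} : Finset V)
    simp at this ⊢
    omega
  have hEq := Finset.eq_of_subset_of_card_le hF (by omega)
  have ha' : a ∈ F := by rw [hEq]; simp
  have hb' : b ∈ F := by rw [hEq]; simp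
  have hc' : c ∈ F := by rw [hEq]; simp
  exact not_three h hba hbc hac (hFS a ha') (hFS b hb') (hFS c hc')

lemma cnt (k : ℕ) : (∑ j ∈ Finset.range k, if j % 3 ≠ 1 then (1:ℕ) else 0) = k - (k+1)/3 := by
  induction k with
  | zero => simp
  | succ k ih =>
    rw [Finset.sum_range_succ, ih]
    by_cases h : k % 3 = 1 <;> simp [h] <;> omega

lemma sum_ite_single {B s : ℕ} (hs : s < B + 1) :
    (∑ j ∈ Finset.range (B+1), if j = s then (1:ℕ) else 2) = 2 * B + 1 := by
  have h1 : (∑ j ∈ Finset.range (B+1), ((if j = s then (1:ℕ) else 2) + (if j = s then 1 else 0)))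
      = ∑ j ∈ Finset.range (B+1), 2 :=
    Finset.sum_congr rfl (fun j _ => by split_ifs <;> rfl)
  rw [Finset.sum_add_distrib, Finset.sum_ite_eq' (Finset.range (B+1)) s (fun _ => (1:ℕ))] at h1
  simp [Finset.mem_range.mpr hs] at h1
  omega

end helpers

def pattb (n i : ℕ) : Bool :=
  decide ((i % 3 ≠ 1 ∧ i ≠ n - 4) ∨ (i = n - 3 ∧ (n-2) % 3 ≠ 1))

def lowSet (n : ℕ) : Finset (Fin (n-2) ⊕ Fin 2) :=
  Finset.univ.filter (fun x => Sum.elim (fun p : Fin (n-2) => pattb n p.val) (fun _ => true) x = true)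

lemma mem_lowSet_inl {n : ℕ} {p : Fin (n-2)} :
    Sum.inl p ∈ lowSet n ↔
      (((p:ℕ) % 3 ≠ 1 ∧ (p:ℕ) ≠ n - 4) ∨ ((p:ℕ) = n - 3 ∧ (n-2) % 3 ≠ 1)) := by
  simp [lowSet, pattb]

lemma mem_lowSet_inr {n : ℕ} (b : Fin 2) : Sum.inr b ∈ lowSet n := by
  simp [lowSet]

lemma lowSet_diss (n : ℕ) (hn : 6 ≤ n) : IsDissocSet (Wtilde n) ↑(lowSet n) := by
  intro v hv
  rcases v with p | b
  · have hp := mem_lowSet_inl.mp (Finset.mem_coe.mp hv)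
    have hpm : (p:ℕ) < n-2 := p.isLt
    by_cases h2 : (p:ℕ) % 3 = 2 ∧ (p:ℕ) + 1 < n-2
    · apply ncard_le_one_of_sub (Sum.inl ⟨(p:ℕ)+1, h2.2⟩)
      rintro u ⟨huS, hadj⟩
      rcases u with q | b
      · have hq := mem_lowSet_inl.mp (Finset.mem_coe.mp huS)
        have hqm : (q:ℕ) < n-2 := q.isLt
        rw [wt_adj_inl_inl] at hadj
        simp only [Set.mem_singleton_iff, Sum.inl.injEq, Fin.ext_iff]
        omega
      · rw [wt_adj_inl_inr] at hadj
        exfalso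
        rcases hadj with ⟨h1, -⟩ | ⟨h1, -⟩ <;> omega
    · by_cases h0 : (p:ℕ) % 3 = 0 ∧ 1 ≤ (p:ℕ)
      · apply ncard_le_one_of_sub (Sum.inl ⟨(p:ℕ)-1, by omega⟩)
        rintro u ⟨huS, hadj⟩
        rcases u with q | b
        · have hq := mem_lowSet_inl.mp (Finset.mem_coe.mp huS)
          have hqm : (q:ℕ) < n-2 := q.isLt
          rw [wt_adj_inl_inl] at hadj
          simp only [Set.mem_singleton_iff, Sum.inl.injEq, Fin.ext_iff]
          omega
        · rw [wt_adj_inl_inr] at hadj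
          exfalso
          rcases hadj with ⟨h1, -⟩ | ⟨h1, -⟩ <;> omega
      · apply ncard_le_one_of_sub (Sum.inl p)
        rintro u ⟨huS, hadj⟩
        rcases u with q | b
        · have hq := mem_lowSet_inl.mp (Finset.mem_coe.mp huS)
          have hqm : (q:ℕ) < n-2 := q.isLt
          rw [wt_adj_inl_inl] at hadj
          simp only [Set.mem_singleton_iff, Sum.inl.injEq, Fin.ext_iff]
          omega
        · rw [wt_adj_inl_inr] at hadj
          exfalso
          rcases hadj with ⟨h1, -⟩ | ⟨h1, -⟩ <;> omega
  · apply ncard_le_one_of_sub (Sum.inr b)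
    rintro u ⟨huS, hadj⟩
    rcases u with q | b'
    · have hq := mem_lowSet_inl.mp (Finset.mem_coe.mp huS)
      have hqm : (q:ℕ) < n-2 := q.isLt
      rw [SimpleGraph.adj_comm, wt_adj_inl_inr] at hadj
      exfalso
      fin_cases b
      · rcases hadj with ⟨h1, -⟩ | ⟨-, h1⟩
        · omega
        · exact absurd h1 (by decide)
      · rcases hadj with ⟨-, h1⟩ | ⟨h1, -⟩
        · exact absurd h1 (by decide)
        · omega
    · exact absurd hadj wt_not_adj_inr

lemma lowSet_card (n : ℕ) (hn : 6 ≤ n) : (lowSet n).card = (2 * n + 2) / 3 := by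
  rw [lowSet, Finset.card_filter]
  rw [Fintype.sum_sum_type]
  have h2 : (∑ b : Fin 2, if Sum.elim (fun p : Fin (n-2) => pattb n p.val) (fun _ : Fin 2 => true) (Sum.inr b) = true then (1:ℕ) else 0) = 2 := by
    simp
  have h1 : (∑ p : Fin (n-2), if Sum.elim (fun p : Fin (n-2) => pattb n p.val) (fun _ : Fin 2 => true) (Sum.inl p) = true then (1:ℕ) else 0)
      = ∑ j ∈ Finset.range (n-2), if pattb n j = true then 1 else 0 := by
    simp only [Sum.elim_inl]
    exact Fin.sum_univ_eq_sum_range (fun j => if pattb n j = true then (1:ℕ) else 0) (n-2)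
  rw [h1, h2]
  have hsplit : n - 2 = (n - 4) + 1 + 1 := by omega
  rw [hsplit, Finset.sum_range_succ, Finset.sum_range_succ]
  have hA : (∑ j ∈ Finset.range (n-4), if pattb n j = true then (1:ℕ) else 0)
      = ∑ j ∈ Finset.range (n-4), if j % 3 ≠ 1 then (1:ℕ) else 0 := by
    apply Finset.sum_congr rfl
    intro j hj
    rw [Finset.mem_range] at hj
    simp only [pattb, decide_eq_true_eq]
    have : ((j % 3 ≠ 1 ∧ j ≠ n - 4) ∨ (j = n - 3 ∧ (n-2) % 3 ≠ 1)) ↔ (j % 3 ≠ 1) := by omega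
    exact if_congr this rfl rfl
  rw [hA, cnt]
  have hv1 : (if pattb n (n-4) = true then (1:ℕ) else 0) = 0 := by
    simp only [pattb, decide_eq_true_eq]
    have : ¬ (((n-4) % 3 ≠ 1 ∧ (n-4) ≠ n - 4) ∨ ((n-4) = n - 3 ∧ (n-2) % 3 ≠ 1)) := by omega
    exact if_neg this
  have hv2 : (if pattb n (n-4+1) = true then (1:ℕ) else 0) = 1 := by
    simp only [pattb, decide_eq_true_eq]
    have : (((n-4+1) % 3 ≠ 1 ∧ (n-4+1) ≠ n - 4) ∨ ((n-4+1) = n - 3 ∧ (n-2) % 3 ≠ 1)) := by omega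
    exact if_pos this
  rw [hv1, hv2]
  omega

lemma upper_bound (n : ℕ) (hn : 6 ≤ n) (S : Set (Fin (n-2) ⊕ Fin 2))
    (hS : IsDissocSet (Wtilde n) S) : S.ncard ≤ (2 * n + 2) / 3 := by
  classical
  set B : ℕ := (n-4)/3 + 1 with hB
  set f : (Fin (n-2) ⊕ Fin 2) → ℕ :=
    Sum.elim (fun p => if (p:ℕ) ≤ 1 then 0 else if n - 4 ≤ (p:ℕ) then B else ((p:ℕ) - 2)/3 + 1)
      (fun b => if b = 0 then 0 else B) with hf
  have hfin : S.Finite := Set.toFinite S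
  set T : Finset (Fin (n-2) ⊕ Fin 2) := hfin.toFinset with hT
  have hTS : ∀ x ∈ T, x ∈ S := fun x hx => (Set.Finite.mem_toFinset hfin).mp hx
  have hcard : S.ncard = T.card := Set.ncard_eq_toFinset_card S hfin
  have hmaps : ∀ x ∈ T, f x ∈ Finset.range (B+1) := by
    intro x hx
    rcases x with p | b
    · have := p.isLt
      simp only [hf, Sum.elim_inl, Finset.mem_range]
      split_ifs <;> omega
    · simp only [hf, Sum.elim_inr, Finset.mem_range]
      split_ifs <;> omega
  rw [hcard, Finset.card_eq_sum_card_fiberwise hmaps]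
  have key : ∀ j ∈ Finset.range (B+1),
      (T.filter (fun x => f x = j)).card ≤ (if j = B - 1 ∧ (n-2) % 3 = 2 then 1 else 2) := by
    intro j hj
    rw [Finset.mem_range] at hj
    by_cases hsp : j = B - 1 ∧ (n-2) % 3 = 2
    · rw [if_pos hsp]
      obtain ⟨rfl, hm2⟩ := hsp
      have hsub : T.filter (fun x => f x = B - 1) ⊆ {Sum.inl ⟨n-5, by omega⟩} := by
        intro x hx
        obtain ⟨-, hxj⟩ := Finset.mem_filter.mp hx
        rcases x with p | b
        · have := p.isLt
          simp only [hf, Sum.elim_inl] at hxj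
          split_ifs at hxj
          all_goals simp only [Finset.mem_singleton, Sum.inl.injEq, Fin.ext_iff]
          all_goals omega
        · simp only [hf, Sum.elim_inr] at hxj
          split_ifs at hxj
          all_goals exfalso; omega
      calc (T.filter (fun x => f x = B - 1)).card ≤ ({Sum.inl ⟨n-5, by omega⟩} : Finset (Fin (n-2) ⊕ Fin 2)).card :=
            Finset.card_le_card hsub
        _ = 1 := Finset.card_singleton _
    · rw [if_neg hsp]
      rcases eq_or_ne j 0 with rfl | hj0
      · -- block {inl 0, inl 1, inr 0}
        apply card_le_two_triple hS (fun x hx => hTS x (Finset.mem_of_mem_filter x hx))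
          (a := Sum.inl ⟨0, by omega⟩) (b := Sum.inl ⟨1, by omega⟩) (c := Sum.inr 0)
        · rw [wt_adj_inl_inl]; right; simp
        · rw [wt_adj_inl_inr]; left; simp
        · simp
        · intro x hx
          obtain ⟨-, hxj⟩ := Finset.mem_filter.mp hx
          rcases x with p | b
          · have := p.isLt
            simp only [hf, Sum.elim_inl] at hxj
            split_ifs at hxj
            all_goals simp only [Finset.mem_insert, Finset.mem_singleton, Sum.inl.injEq, Fin.ext_iff]
            all_goals
              first
              | (left; omega)
              | (right; left; omega)
              | omega
          · simp only [hf, Sum.elim_inr] at hxj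
            split_ifs at hxj with hb0
            · simp [hb0]
      · rcases eq_or_ne j B with rfl | hjB
        · -- block {inl (n-4), inl (n-3), inr 1}
          apply card_le_two_triple hS (fun x hx => hTS x (Finset.mem_of_mem_filter x hx))
            (a := Sum.inl ⟨n-3, by omega⟩) (b := Sum.inl ⟨n-4, by omega⟩) (c := Sum.inr 1)
          · rw [wt_adj_inl_inl]; left; simp; omega
          · rw [wt_adj_inl_inr]; right; simp
          · simp
          · intro x hx
            obtain ⟨-, hxj⟩ := Finset.mem_filter.mp hx
            rcases x with p | b
            · have := p.isLt
              simp only [hf, Sum.elim_inl] at hxj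
              split_ifs at hxj
              all_goals simp only [Finset.mem_insert, Finset.mem_singleton, Sum.inl.injEq, Fin.ext_iff]
              all_goals
                first
                | (left; omega)
                | (right; left; omega)
                | omega
            · simp only [hf, Sum.elim_inr] at hxj
              split_ifs at hxj with hb0
              · have : b = 1 := by omega
                simp [this]
        · -- middle block {inl (3j-1), inl (3j), inl (3j+1)}
          have hjle : j ≤ B - 1 := by omega
          have h3j : 3*j + 1 < n - 2 := by omega
          apply card_le_two_triple hS (fun x hx => hTS x (Finset.mem_of_mem_filter x hx))
            (a := Sum.inl ⟨3*j - 1, by omega⟩) (b := Sum.inl ⟨3*j, by omega⟩)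
            (c := Sum.inl ⟨3*j + 1, by omega⟩)
          · rw [wt_adj_inl_inl]; right; simp; omega
          · rw [wt_adj_inl_inl]; left; simp
          · simp only [ne_eq, Sum.inl.injEq, Fin.ext_iff]; omega
          · intro x hx
            obtain ⟨-, hxj⟩ := Finset.mem_filter.mp hx
            rcases x with p | b
            · have := p.isLt
              simp only [hf, Sum.elim_inl] at hxj
              split_ifs at hxj
              all_goals simp only [Finset.mem_insert, Finset.mem_singleton, Sum.inl.injEq, Fin.ext_iff]
              all_goals
                first
                | (left; omega)
                | (right; left; omega)
                | (right; right; omega)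
                | omega
            · simp only [hf, Sum.elim_inr] at hxj
              split_ifs at hxj <;> (exfalso; omega)
  calc (∑ j ∈ Finset.range (B+1), (T.filter (fun x => f x = j)).card)
      ≤ ∑ j ∈ Finset.range (B+1), (if j = B - 1 ∧ (n-2) % 3 = 2 then 1 else 2) :=
        Finset.sum_le_sum key
    _ ≤ (2 * n + 2) / 3 := by
        by_cases hm2 : (n-2) % 3 = 2
        · have heq : ∀ j ∈ Finset.range (B+1),
              (if j = B - 1 ∧ (n-2) % 3 = 2 then (1:ℕ) else 2) = (if j = B - 1 then 1 else 2) := by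
            intro j hj
            by_cases h : j = B - 1 <;> simp [h, hm2]
          rw [Finset.sum_congr rfl heq, sum_ite_single (by omega)]
          have h3 : n % 3 = 0 ∨ n % 3 = 1 ∨ n % 3 = 2 := by omega
          rcases h3 with h3 | h3 | h3 <;> omega
        · have heq : ∀ j ∈ Finset.range (B+1),
              (if j = B - 1 ∧ (n-2) % 3 = 2 then (1:ℕ) else 2) = 2 := by
            intro j hj
            simp [hm2]
          rw [Finset.sum_congr rfl heq, Finset.sum_const, Finset.card_range]
          simp only [smul_eq_mul]
          have h3 : n % 3 = 0 ∨ n % 3 = 1 ∨ n % 3 = 2 := by omega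
          rcases h3 with h3 | h3 | h3 <;> omega

/-- For every `n ≥ 6`, the dissociation number of the tree `W̃_n` is `⌈2n/3⌉`
(which equals `(2n+2)/3` in natural-number arithmetic). -/
theorem dissNum_Wtilde (n : ℕ) (hn : 6 ≤ n) :
    dissNum (Wtilde n) = (2 * n + 2) / 3 := by
  have hmem : (2*n+2)/3 ∈ {k | ∃ S : Set (Fin (n-2) ⊕ Fin 2), IsDissocSet (Wtilde n) S ∧ S.ncard = k} := by
    refine ⟨↑(lowSet n), lowSet_diss n hn, ?_⟩
    rw [Set.ncard_coe_finset]
    exact lowSet_card n hn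
  have hub : (2*n+2)/3 ∈ upperBounds {k | ∃ S : Set (Fin (n-2) ⊕ Fin 2), IsDissocSet (Wtilde n) S ∧ S.ncard = k} := by
    rintro k ⟨S, hS, rfl⟩
    exact upper_bound n hn S hS
  unfold dissNum
  exact le_antisymm (csSup_le ⟨_, hmem⟩ hub) (le_csSup ⟨_, hub⟩ hmem)
end

section
/- Let T be a tree and let uv be an edge of T. Let T_{uv} be the tree obtained from T by subdividing the edge uv once (deleting uv, adding a new vertex w and edges uw and wv). Then diss(T_{uv}) ∈ {diss(T), diss(T) + 1}. -/
/-- The `k`-subdivision `T_{uv}^{(k)}` of the edge `uv` of `T`: the edge `uv` is replaced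
by a path `u, w₀, w₁, …, w_{k-1}, v` of length `k+1` through `k` new vertices
`w₀, …, w_{k-1}` (the elements of `Fin k`); all other edges of `T` are kept. -/
def subdivide {V : Type} (T : SimpleGraph V) (u v : V) (k : ℕ) :
    SimpleGraph (V ⊕ Fin k) :=
  SimpleGraph.fromRel (fun x y =>
    (∃ a b : V, T.Adj a b ∧ ¬((a = u ∧ b = v) ∨ (a = v ∧ b = u)) ∧
      x = Sum.inl a ∧ y = Sum.inl b) ∨
    (∃ p : Fin k, x = Sum.inl u ∧ (p : ℕ) = 0 ∧ y = Sum.inr p) ∨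
    (∃ p q : Fin k, x = Sum.inr p ∧ y = Sum.inr q ∧ (p : ℕ) + 1 = q) ∨
    (∃ p : Fin k, x = Sum.inr p ∧ (p : ℕ) = k - 1 ∧ y = Sum.inl v))

section IsDissocSet

variable {V W : Type} {G : SimpleGraph V} {S S' : Set V}

lemma IsDissocSet.mono [Finite V] (h : IsDissocSet G S') (hS : S ⊆ S') :
    IsDissocSet G S := fun a ha =>
  (Set.ncard_le_ncard fun _ hb => by exact ⟨hS hb.1, hb.2⟩).trans (h a (hS ha))

lemma IsDissocSet.eq_of_adj_of_adj [Finite V] (h : IsDissocSet G S) {a b c : V} (ha : a ∈ S)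
    (hb : b ∈ S) (hc : c ∈ S) (hab : G.Adj a b) (hac : G.Adj a c) : b = c :=
  ((Set.ncard_le_one (Set.toFinite _)).mp (h a ha)) b ⟨hb, hab⟩ c ⟨hc, hac⟩

lemma IsDissocSet.preimage [Finite W] {H : SimpleGraph W} {f : V → W} {S : Set W}
    (hf : f.Injective) (h : IsDissocSet H S) : IsDissocSet (H.comap f) (f ⁻¹' S) := fun a ha =>
  (Set.ncard_le_ncard_of_injOn f (fun _ hb => hb) hf.injOn).trans (h (f a) ha)

lemma IsDissocSet.image [Finite V] {H : SimpleGraph W} {f : V → W} (hf : f.Injective)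
    (hle : H.comap f ≤ G) (h : IsDissocSet G S) : IsDissocSet H (f '' S) := by
  rintro _ ⟨a, ha, rfl⟩
  calc {y ∈ f '' S | H.Adj (f a) y}.ncard
      ≤ (f '' {b ∈ S | G.Adj a b}).ncard := by
        refine Set.ncard_le_ncard ?_ ((Set.toFinite _).image f)
        rintro _ ⟨⟨b, hb, rfl⟩, hab⟩
        exact ⟨b, ⟨hb, hle hab⟩, rfl⟩
    _ = {b ∈ S | G.Adj a b}.ncard := Set.ncard_image_of_injective _ hf
    _ ≤ 1 := h a ha

lemma IsDissocSet.of_deleteEdges {u v : V} (h : IsDissocSet (G.deleteEdges {s(u, v)}) S)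
    (huv : u ∉ S ∨ v ∉ S) : IsDissocSet G S := by
  intro a ha
  convert h a ha using 3 with b
  simp only [SimpleGraph.deleteEdges_adj, Set.mem_singleton_iff, Sym2.eq_iff]
  grind

end IsDissocSet

section dissNum

variable {V : Type} [Fintype V] (G : SimpleGraph V)

lemma bddAbove_ncard_isDissocSet :
    BddAbove {k | ∃ S : Set V, IsDissocSet G S ∧ S.ncard = k} := by
  refine ⟨Fintype.card V, ?_⟩
  rintro _ ⟨S, -, rfl⟩
  exact (Set.ncard_le_card S).trans_eq Nat.card_eq_fintype_card

lemma IsDissocSet.ncard_le_dissNum {G : SimpleGraph V} {S : Set V} (h : IsDissocSet G S) :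
    S.ncard ≤ dissNum G :=
  le_csSup (bddAbove_ncard_isDissocSet G) ⟨S, h, rfl⟩

lemma exists_isDissocSet_ncard_eq_dissNum :
    ∃ S : Set V, IsDissocSet G S ∧ S.ncard = dissNum G :=
  Nat.sSup_mem ⟨0, by exact ⟨∅, fun _ h => h.elim, Set.ncard_empty V⟩⟩
    (bddAbove_ncard_isDissocSet G)

end dissNum

section subdivide

variable {V : Type} (T : SimpleGraph V) (u v : V)

lemma comap_inl_subdivide (k : ℕ) :
    (subdivide T u v k).comap Sum.inl = T.deleteEdges {s(u, v)} := by
  ext a b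
  simp only [SimpleGraph.comap_adj, subdivide, SimpleGraph.fromRel_adj,
    SimpleGraph.deleteEdges_adj, Set.mem_singleton_iff, Sym2.eq_iff]
  aesop (add safe apply SimpleGraph.Adj.symm)

lemma subdivide_one_adj_inr_inl {p : Fin 1} {a : V} :
    (subdivide T u v 1).Adj (Sum.inr p) (Sum.inl a) ↔ a = u ∨ a = v := by
  simp only [subdivide, SimpleGraph.fromRel_adj]
  aesop

variable [Fintype V]

lemma dissNum_le_dissNum_subdivide (k : ℕ) : dissNum T ≤ dissNum (subdivide T u v k) := by
  obtain ⟨S, hS, hcard⟩ := exists_isDissocSet_ncard_eq_dissNum T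
  have hS' : IsDissocSet (subdivide T u v k) (Sum.inl '' S) :=
    hS.image Sum.inl_injective (comap_inl_subdivide T u v k ▸ SimpleGraph.deleteEdges_le _)
  simpa [Set.ncard_image_of_injective _ Sum.inl_injective, hcard] using hS'.ncard_le_dissNum

lemma dissNum_subdivide_one_le {u v : V} (huv : u ≠ v) :
    dissNum (subdivide T u v 1) ≤ dissNum T + 1 := by
  obtain ⟨S', hS', hcard⟩ := exists_isDissocSet_ncard_eq_dissNum (subdivide T u v 1)
  set S := Sum.inl ⁻¹' S'
  have hS : IsDissocSet (T.deleteEdges {s(u, v)}) S :=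
    comap_inl_subdivide T u v 1 ▸ hS'.preimage Sum.inl_injective
  have hS'_sub : S' ⊆ insert (Sum.inr 0) (Sum.inl '' S) := by
    rintro (a | p) h
    · exact Or.inr ⟨a, h, rfl⟩
    · exact Or.inl (by rw [Subsingleton.elim p 0])
  have hS'_card : S'.ncard ≤ S.ncard + 1 :=
    calc S'.ncard ≤ (insert (Sum.inr 0) (Sum.inl '' S)).ncard := Set.ncard_le_ncard hS'_sub
      _ ≤ (Sum.inl '' S).ncard + 1 := Set.ncard_insert_le _ _
      _ = S.ncard + 1 := by rw [Set.ncard_image_of_injective _ Sum.inl_injective]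
  by_cases huvS : u ∈ S ∧ v ∈ S
  · have hw : Sum.inr 0 ∉ S' := fun hw => huv <| Sum.inl_injective <|
      hS'.eq_of_adj_of_adj hw huvS.1 huvS.2 ((subdivide_one_adj_inr_inl T u v).2 (.inl rfl))
        ((subdivide_one_adj_inr_inl T u v).2 (.inr rfl))
    have hS'_card_le : S'.ncard ≤ S.ncard := by
      refine (Set.ncard_le_ncard fun x hx => ?_).trans_eq
        (Set.ncard_image_of_injective _ Sum.inl_injective)
      exact (hS'_sub hx).resolve_left (by rintro rfl; exact hw hx)
    have hS_diff := ((hS.mono (Set.sdiff_subset (t := {u}))).of_deleteEdges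
      (.inl fun h => h.2 rfl)).ncard_le_dissNum
    rw [Set.ncard_sdiff_singleton_of_mem huvS.1] at hS_diff
    omega
  · have hS_le := (hS.of_deleteEdges (not_and_or.mp huvS)).ncard_le_dissNum
    omega

end subdivide

theorem dissNum_subdivide_one_general
    {V : Type} [Fintype V] (T : SimpleGraph V)
    (u v : V) (huv : T.Adj u v) :
    dissNum (subdivide T u v 1) = dissNum T ∨
    dissNum (subdivide T u v 1) = dissNum T + 1 := by
  have hge := dissNum_le_dissNum_subdivide T u v 1
  have hle := dissNum_subdivide_one_le T huv.ne
  omega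

/-- If `uv` is an edge of a tree `T` and `T_{uv}` is obtained from `T` by subdividing the
edge `uv` once, then `diss(T_{uv}) ∈ {diss(T), diss(T) + 1}`. -/
theorem dissNum_subdivide_one
    {V : Type} [Fintype V] (T : SimpleGraph V) (hT : T.IsTree)
    (u v : V) (huv : T.Adj u v) :
    dissNum (subdivide T u v 1) = dissNum T ∨
    dissNum (subdivide T u v 1) = dissNum T + 1 :=
  dissNum_subdivide_one_general T u v huv
end
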